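/- arXiv:1305.1407 — 6 statements merged into one kernel-verified Lean document; each statement's English description precedes it below -/
import Mathlib

section
/- Let G be a finite connected simple graph with edge-weight function w : E(G) → ℕ. Fix a vertex v ∈ V(G) and let d(x) denote the graph distance from v to x. For each i ≥ 0 let E_i = { {x,y} ∈ E(G) : d(x) = i and d(y) = i+1 }. Fix an integer k > 1, and for each i ∈ {0, 1, …, k−1} let F_i = ⋃_{j ≥ 0} E_{i+jk} and let G_i be the subgraph of G induced by F_i. Then ∑_{i=0}^{k−1} ν_w(G_i) ≤ 2·ν_w(G). -/
open scoped BigOperators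

/-- `M` is a matching in the simple graph `G`: a set of edges of `G`, no two of
which share an endpoint. -/
def IsMatchingOn {V : Type*} (G : SimpleGraph V) (M : Set (Sym2 V)) : Prop :=
  M ⊆ G.edgeSet ∧ ∀ e ∈ M, ∀ f ∈ M, e ≠ f → ∀ v : V, v ∈ e → v ∉ f

/-- `nuW G w` is the maximum weight of a matching in `G` with respect to the
edge-weight function `w`. -/
noncomputable def nuW {V : Type*} (G : SimpleGraph V) (w : Sym2 V → ℕ) : ℕ :=
  sSup {n : ℕ | ∃ M : Set (Sym2 V), IsMatchingOn G M ∧ (∑ᶠ e ∈ M, w e) = n}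

/-- `levelEdges G v i` is the set of edges `{x, y}` of `G` with `d(x) = i` and
`d(y) = i + 1`, where `d` is the graph distance from `v`. -/
def levelEdges {V : Type*} (G : SimpleGraph V) (v : V) (i : ℕ) : Set (Sym2 V) :=
  {e : Sym2 V | e ∈ G.edgeSet ∧
    ∃ x y : V, e = s(x, y) ∧ G.dist v x = i ∧ G.dist v y = i + 1}

/-- `levelUnion G v k i = ⋃ j, levelEdges G v (i + j * k)`, the union of every
`k`-th BFS level starting at level `i`. -/
def levelUnion {V : Type*} (G : SimpleGraph V) (v : V) (k i : ℕ) : Set (Sym2 V) :=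
  ⋃ j : ℕ, levelEdges G v (i + j * k)

section Aux
open scoped Classical
variable {V : Type*} [Fintype V]

lemma finsum_mem_set_eq (w : Sym2 V → ℕ) (M : Set (Sym2 V)) :
    (∑ᶠ e ∈ M, w e) = ∑ e ∈ M.toFinset, w e := by
  rw [← finsum_mem_coe_finset, Set.coe_toFinset]

lemma nuW_bddAbove (G : SimpleGraph V) (w : Sym2 V → ℕ) :
    BddAbove {n : ℕ | ∃ M : Set (Sym2 V), IsMatchingOn G M ∧ (∑ᶠ e ∈ M, w e) = n} := by
  refine ⟨∑ e : Sym2 V, w e, ?_⟩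
  rintro n ⟨M, -, rfl⟩
  rw [finsum_mem_set_eq]
  exact Finset.sum_le_sum_of_subset (Finset.subset_univ _)

lemma weight_le_nuW {G : SimpleGraph V} (w : Sym2 V → ℕ) {M : Set (Sym2 V)}
    (h : IsMatchingOn G M) : (∑ᶠ e ∈ M, w e) ≤ nuW G w :=
  le_csSup (nuW_bddAbove G w) ⟨M, h, rfl⟩

lemma exists_opt (G : SimpleGraph V) (w : Sym2 V → ℕ) :
    ∃ M, IsMatchingOn G M ∧ (∑ᶠ e ∈ M, w e) = nuW G w := by
  have hne : {n : ℕ | ∃ M : Set (Sym2 V), IsMatchingOn G M ∧ (∑ᶠ e ∈ M, w e) = n}.Nonempty :=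
    ⟨0, ∅, ⟨Set.empty_subset _, by simp⟩, by simp⟩
  exact Nat.sSup_mem hne (nuW_bddAbove G w)

lemma level_unique {G : SimpleGraph V} {v : V} {e : Sym2 V} {i i' : ℕ}
    (h : e ∈ levelEdges G v i) (h' : e ∈ levelEdges G v i') : i = i' := by
  obtain ⟨-, x, y, rfl, hx, hy⟩ := h
  obtain ⟨-, x', y', hxy, hx', hy'⟩ := h'
  rw [Sym2.eq_iff] at hxy
  rcases hxy with ⟨h1, h2⟩ | ⟨h1, h2⟩ <;> subst h1 <;> subst h2 <;> omega

lemma mem_level_dist {G : SimpleGraph V} {v : V} {e : Sym2 V} {ℓ : ℕ} {u : V}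
    (h : e ∈ levelEdges G v ℓ) (hu : u ∈ e) : G.dist v u = ℓ ∨ G.dist v u = ℓ + 1 := by
  obtain ⟨-, x, y, rfl, hx, hy⟩ := h
  rcases Sym2.mem_iff.mp hu with rfl | rfl
  · exact Or.inl hx
  · exact Or.inr hy

end Aux

/-- The sum over `i < k` of the maximum matching weights of the subgraphs induced by
the unions of every `k`-th BFS level is at most twice the maximum matching weight
of `G`. -/
theorem sum_nuW_levelUnion_le {V : Type*} [Fintype V] (G : SimpleGraph V)
    (hG : G.Connected) (w : Sym2 V → ℕ) (v : V) (k : ℕ) (hk : 1 < k) :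
    ∑ i ∈ Finset.range k,
        nuW (SimpleGraph.fromEdgeSet (levelUnion G v k i)) w ≤ 2 * nuW G w := by
  classical
  choose M hM hMw using fun i => exists_opt (SimpleGraph.fromEdgeSet (levelUnion G v k i)) w
  -- every edge of M i lies in a unique level i + j * k
  have hlev : ∀ i, ∀ e ∈ M i, ∃ j, e ∈ levelEdges G v (i + j * k) := by
    intro i e he
    have h1 := (hM i).1 he
    rw [SimpleGraph.edgeSet_fromEdgeSet] at h1
    exact Set.mem_iUnion.mp h1.1
  -- the filtered pieces
  set F : ℕ → ℕ → Finset (Sym2 V) := fun c i =>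
    (M i).toFinset.filter (fun e => ∃ ℓ, ℓ % 2 = c ∧ e ∈ levelEdges G v ℓ) with hF
  -- if an edge lies in M i and M i' with i, i' < k then i = i'
  have hidx : ∀ {i i' : ℕ} {e : Sym2 V}, i < k → i' < k → e ∈ M i → e ∈ M i' → i = i' := by
    intro i i' e hi hi' he he'
    obtain ⟨j, hj⟩ := hlev i e he
    obtain ⟨j', hj'⟩ := hlev i' e he'
    have h := level_unique hj hj'
    have h1 : (i + j * k) % k = i := by rw [Nat.add_mul_mod_self_right]; exact Nat.mod_eq_of_lt hi
    have h2 : (i' + j' * k) % k = i' := by rw [Nat.add_mul_mod_self_right]; exact Nat.mod_eq_of_lt hi'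
    rw [← h1, ← h2, h]
  -- the union over i < k of F c i is a matching in G
  have hmatch : ∀ c, IsMatchingOn G ↑((Finset.range k).biUnion (F c)) := by
    intro c
    constructor
    · intro e he
      rw [Finset.coe_biUnion] at he
      simp only [Set.mem_iUnion, Finset.coe_range, Set.mem_Iio, Finset.mem_coe] at he
      obtain ⟨i, hi, he⟩ := he
      rw [hF, Finset.mem_filter] at he
      obtain ⟨heM, ℓ, -, hℓ⟩ := he
      exact hℓ.1
    · intro e he f hf hef u hue huf
      rw [Finset.mem_coe, Finset.mem_biUnion] at he hf
      obtain ⟨i, hi, he⟩ := he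
      obtain ⟨i', hi', hf⟩ := hf
      rw [Finset.mem_range] at hi hi'
      rw [hF, Finset.mem_filter, Set.mem_toFinset] at he hf
      obtain ⟨heM, ℓe, hℓec, hℓe⟩ := he
      obtain ⟨hfM, ℓf, hℓfc, hℓf⟩ := hf
      by_cases hll : ℓe = ℓf
      · -- same level forces same i, then use that M i is a matching
        obtain ⟨j, hj⟩ := hlev i e heM
        obtain ⟨j', hj'⟩ := hlev i' f hfM
        have hii : i = i' := by
          have e1 : i + j * k = ℓe := level_unique hj hℓe
          have e2 : i' + j' * k = ℓf := level_unique hj' hℓf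
          have h1 : (i + j * k) % k = i := by
            rw [Nat.add_mul_mod_self_right]; exact Nat.mod_eq_of_lt hi
          have h2 : (i' + j' * k) % k = i' := by
            rw [Nat.add_mul_mod_self_right]; exact Nat.mod_eq_of_lt hi'
          rw [← h1, ← h2, e1, e2, hll]
        subst hii
        exact (hM i).2 e heM f hfM hef u hue huf
      · -- different levels of the same parity: distance contradiction
        have d1 := mem_level_dist hℓe hue
        have d2 := mem_level_dist hℓf huf
        omega
  -- split each optimal matching by level parity
  have hsplit : ∀ i < k, nuW (SimpleGraph.fromEdgeSet (levelUnion G v k i)) w =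
      (∑ e ∈ F 0 i, w e) + (∑ e ∈ F 1 i, w e) := by
    intro i hi
    rw [← hMw i, finsum_mem_set_eq]
    have : F 1 i = (M i).toFinset.filter
        (fun e => ¬ ∃ ℓ, ℓ % 2 = 0 ∧ e ∈ levelEdges G v ℓ) := by
      apply Finset.filter_congr
      intro e he
      rw [Set.mem_toFinset] at he
      obtain ⟨j, hj⟩ := hlev i e he
      constructor
      · rintro ⟨ℓ, hℓ1, hℓ2⟩ ⟨ℓ', hℓ'1, hℓ'2⟩
        have := level_unique hℓ2 hℓ'2
        omega
      · intro hno
        refine ⟨i + j * k, ?_, hj⟩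
        by_contra hodd
        exact hno ⟨i + j * k, by omega, hj⟩
    rw [this, Finset.sum_filter_add_sum_filter_not]
  -- disjointness of the pieces across i
  have hdisj : ∀ c, (↑(Finset.range k) : Set ℕ).PairwiseDisjoint (F c) := by
    intro c i hi i' hi' hii'
    rw [Finset.coe_range, Set.mem_Iio] at hi hi'
    refine Finset.disjoint_left.mpr ?_
    intro e he he'
    rw [hF, Finset.mem_filter, Set.mem_toFinset] at he he'
    exact hii' (hidx hi hi' he.1 he'.1)
  calc ∑ i ∈ Finset.range k, nuW (SimpleGraph.fromEdgeSet (levelUnion G v k i)) w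
      = ∑ i ∈ Finset.range k, ((∑ e ∈ F 0 i, w e) + (∑ e ∈ F 1 i, w e)) := by
        apply Finset.sum_congr rfl
        intro i hi
        exact hsplit i (Finset.mem_range.mp hi)
    _ = (∑ e ∈ (Finset.range k).biUnion (F 0), w e)
        + (∑ e ∈ (Finset.range k).biUnion (F 1), w e) := by
        rw [Finset.sum_add_distrib, Finset.sum_biUnion (hdisj 0), Finset.sum_biUnion (hdisj 1)]
    _ ≤ nuW G w + nuW G w := by
        gcongr
        · calc (∑ e ∈ (Finset.range k).biUnion (F 0), w e)
              = ∑ᶠ e ∈ (↑((Finset.range k).biUnion (F 0)) : Set (Sym2 V)), w e := by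
                rw [finsum_mem_coe_finset]
            _ ≤ nuW G w := weight_le_nuW w (hmatch 0)
        · calc (∑ e ∈ (Finset.range k).biUnion (F 1), w e)
              = ∑ᶠ e ∈ (↑((Finset.range k).biUnion (F 1)) : Set (Sym2 V)), w e := by
                rw [finsum_mem_coe_finset]
            _ ≤ nuW G w := weight_le_nuW w (hmatch 1)
    _ = 2 * nuW G w := by ring
end

section
/- Let G be a finite connected simple graph with edge-weight function w : E(G) → ℕ. Fix a vertex v ∈ V(G) and let d(x) denote the graph distance from v to x. For each i ≥ 0 let E_i = { {x,y} ∈ E(G) : d(x) = i and d(y) = i+1 }. Fix an integer k > 1, and for each i ∈ {0, 1, …, k−1} let F_i = ⋃_{j ≥ 0} E_{i+jk} and let G_i be the subgraph of G induced by F_i. Then there exists an index i ∈ {0, 1, …, k−1} such that k·ν_w(G_i) ≤ 2·ν_w(G). -/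
open scoped BigOperators

/-- An edge lies in at most one BFS level. -/
lemma levelEdges_unique {V : Type*} (G : SimpleGraph V) (v : V) {e : Sym2 V} {m m' : ℕ}
    (h : e ∈ levelEdges G v m) (h' : e ∈ levelEdges G v m') : m = m' := by
  obtain ⟨-, x, y, rfl, hx, hy⟩ := h
  obtain ⟨-, x', y', hxy, hx', hy'⟩ := h'
  rw [Sym2.eq_iff] at hxy
  rcases hxy with ⟨h1, h2⟩ | ⟨h1, h2⟩ <;> subst h1 <;> subst h2 <;> omega

/-- Endpoints of a level-`m` edge are at distance `m` or `m+1` from `v`. -/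
lemma dist_of_mem_levelEdges {V : Type*} (G : SimpleGraph V) (v : V) {e : Sym2 V} {m : ℕ}
    (h : e ∈ levelEdges G v m) {u : V} (hu : u ∈ e) :
    G.dist v u = m ∨ G.dist v u = m + 1 := by
  obtain ⟨-, x, y, rfl, hx, hy⟩ := h
  rcases Sym2.mem_iff.mp hu with rfl | rfl
  · exact Or.inl hx
  · exact Or.inr hy

lemma finsum_mem_eq_sum_toFinset {V : Type*} [Fintype V] (w : Sym2 V → ℕ) (M : Set (Sym2 V)) :
    (∑ᶠ e ∈ M, w e) = ∑ e ∈ (Set.toFinite M).toFinset, w e := by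
  rw [← finsum_mem_coe_finset, Set.Finite.coe_toFinset]

/-- `nuW` is attained, and is an upper bound on the weight of every matching. -/
lemma nuW_spec {V : Type*} [Fintype V] (G : SimpleGraph V) (w : Sym2 V → ℕ) :
    (∃ M : Set (Sym2 V), IsMatchingOn G M ∧ (∑ᶠ e ∈ M, w e) = nuW G w) ∧
      ∀ M' : Set (Sym2 V), IsMatchingOn G M' → (∑ᶠ e ∈ M', w e) ≤ nuW G w := by
  classical
  set S := {n : ℕ | ∃ M : Set (Sym2 V), IsMatchingOn G M ∧ (∑ᶠ e ∈ M, w e) = n} with hS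
  have hne : S.Nonempty := ⟨0, ∅, ⟨Set.empty_subset _, fun e he => absurd he (Set.notMem_empty e)⟩,
    by simp⟩
  have hbdd : BddAbove S := by
    refine ⟨∑ e : Sym2 V, w e, fun n hn => ?_⟩
    obtain ⟨M, -, rfl⟩ := hn
    rw [finsum_mem_eq_sum_toFinset]
    exact Finset.sum_le_sum_of_subset (Finset.subset_univ _)
  have hmem : sSup S ∈ S := Nat.sSup_mem hne hbdd
  obtain ⟨M, hM, hMw⟩ := hmem
  exact ⟨⟨M, hM, hMw⟩, fun M' hM' => le_csSup hbdd ⟨M', hM', rfl⟩⟩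

/-- Every edge of a matching in the level-union subgraph has a (unique) level,
congruent to `i` mod `k`. -/
lemma level_of_mem {V : Type*} (G : SimpleGraph V) (v : V) (k i : ℕ) (hik : i < k)
    {M : Set (Sym2 V)} (hM : IsMatchingOn (SimpleGraph.fromEdgeSet (levelUnion G v k i)) M)
    {e : Sym2 V} (he : e ∈ M) : ∃ m, e ∈ levelEdges G v m ∧ m % k = i := by
  have h1 := hM.1 he
  rw [SimpleGraph.edgeSet_fromEdgeSet] at h1
  obtain ⟨j, hj⟩ := Set.mem_iUnion.mp h1.1
  exact ⟨i + j * k, hj, by rw [Nat.add_mul_mod_self_right, Nat.mod_eq_of_lt hik]⟩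

/-- The union over `i < k` of the parity-`r` parts of matchings of the
level-union subgraphs is a matching in `G`. -/
lemma matching_parity_union {V : Type*} (G : SimpleGraph V) (v : V) (k : ℕ)
    (M : ℕ → Set (Sym2 V))
    (hM : ∀ i < k, IsMatchingOn (SimpleGraph.fromEdgeSet (levelUnion G v k i)) (M i))
    (r : ℕ) :
    IsMatchingOn G {e | ∃ i < k, e ∈ M i ∧ ∃ m, e ∈ levelEdges G v m ∧ m % 2 = r} := by
  constructor
  · rintro e ⟨i, hi, hei, m, hm, -⟩
    exact hm.1
  · rintro e ⟨i, hi, hei, m, hm, hmr⟩ f ⟨j, hj, hfj, m', hm', hm'r⟩ hne u hue huf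
    have de := dist_of_mem_levelEdges G v hm hue
    have df := dist_of_mem_levelEdges G v hm' huf
    have hmm' : m = m' := by rcases de with h1 | h1 <;> rcases df with h2 | h2 <;> omega
    subst hmm'
    obtain ⟨m₁, hm₁, hm₁k⟩ := level_of_mem G v k i hi (hM i hi) hei
    obtain ⟨m₂, hm₂, hm₂k⟩ := level_of_mem G v k j hj (hM j hj) hfj
    have e1 : m₁ = m := levelEdges_unique G v hm₁ hm
    have e2 : m₂ = m := levelEdges_unique G v hm₂ hm'
    have hij : i = j := by rw [← hm₁k, ← hm₂k, e1, e2]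
    subst hij
    exact (hM i hi).2 e hei f hfj hne u hue huf

/-- There is some `i < k` such that the maximum matching weight of the subgraph
induced by the union of every `k`-th BFS level starting at `i` is at most
`(2/k)` times the maximum matching weight of `G`. -/
theorem exists_nuW_levelUnion_le {V : Type*} [Fintype V] (G : SimpleGraph V)
    (hG : G.Connected) (w : Sym2 V → ℕ) (v : V) (k : ℕ) (hk : 1 < k) :
    ∃ i < k,
      k * nuW (SimpleGraph.fromEdgeSet (levelUnion G v k i)) w ≤ 2 * nuW G w := by
  classical
  set ν : ℕ → ℕ := fun i => nuW (SimpleGraph.fromEdgeSet (levelUnion G v k i)) w with hν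
  -- choose optimal matchings in each level-union subgraph
  have hopt : ∀ i, ∃ M : Set (Sym2 V),
      IsMatchingOn (SimpleGraph.fromEdgeSet (levelUnion G v k i)) M ∧
        (∑ᶠ e ∈ M, w e) = ν i := fun i =>
    (nuW_spec (SimpleGraph.fromEdgeSet (levelUnion G v k i)) w).1
  choose M hMm hMw using hopt
  have hGle := (nuW_spec G w).2
  -- finset versions
  set T : ℕ → Finset (Sym2 V) := fun i => (Set.toFinite (M i)).toFinset with hT
  have hTmem : ∀ i e, e ∈ T i ↔ e ∈ M i := fun i e => Set.Finite.mem_toFinset _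
  have hTw : ∀ i, (∑ e ∈ T i, w e) = ν i := fun i => by
    rw [← hMw i, finsum_mem_eq_sum_toFinset]
  -- parity predicates
  set Q0 : Sym2 V → Prop := fun e => ∃ m, e ∈ levelEdges G v m ∧ m % 2 = 0 with hQ0
  set Q1 : Sym2 V → Prop := fun e => ∃ m, e ∈ levelEdges G v m ∧ m % 2 = 1 with hQ1
  -- split each matching by parity of level
  have split : ∀ i ∈ Finset.range k,
      (∑ e ∈ T i, w e) = (∑ e ∈ (T i).filter Q0, w e) + (∑ e ∈ (T i).filter Q1, w e) := by
    intro i hi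
    rw [Finset.mem_range] at hi
    rw [← Finset.sum_filter_add_sum_filter_not (T i) Q0 w]
    congr 1
    apply Finset.sum_congr _ (fun _ _ => rfl)
    apply Finset.filter_congr
    intro e he
    obtain ⟨m, hm, -⟩ := level_of_mem G v k i hi (hMm i) ((hTmem i e).mp he)
    constructor
    · rintro hnQ
      refine ⟨m, hm, ?_⟩
      have : m % 2 ≠ 0 := fun h => hnQ ⟨m, hm, h⟩
      omega
    · rintro ⟨m', hm', h1⟩ ⟨m'', hm'', h0⟩
      have := levelEdges_unique G v hm' hm''
      omega
  -- the parity-r unions, as finsets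
  set N0 : Finset (Sym2 V) := (Finset.range k).biUnion (fun i => (T i).filter Q0) with hN0
  set N1 : Finset (Sym2 V) := (Finset.range k).biUnion (fun i => (T i).filter Q1) with hN1
  -- disjointness of the pieces
  have hdisj : ∀ (Q : Sym2 V → Prop), (↑(Finset.range k) : Set ℕ).PairwiseDisjoint
      (fun i => (T i).filter Q) := by
    intro Q i hi j hj hij
    rw [Finset.coe_range, Set.mem_Iio] at hi hj
    refine Finset.disjoint_left.mpr ?_
    intro e hei hej
    obtain ⟨hei', -⟩ := Finset.mem_filter.mp hei
    obtain ⟨hej', -⟩ := Finset.mem_filter.mp hej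
    obtain ⟨m₁, hm₁, hm₁k⟩ := level_of_mem G v k i hi (hMm i) ((hTmem i e).mp hei')
    obtain ⟨m₂, hm₂, hm₂k⟩ := level_of_mem G v k j hj (hMm j) ((hTmem j e).mp hej')
    have e1 : m₁ = m₂ := levelEdges_unique G v hm₁ hm₂
    exact hij (by rw [← hm₁k, ← hm₂k, e1])
  have hsum0 : (∑ e ∈ N0, w e) = ∑ i ∈ Finset.range k, ∑ e ∈ (T i).filter Q0, w e :=
    Finset.sum_biUnion (hdisj Q0)
  have hsum1 : (∑ e ∈ N1, w e) = ∑ i ∈ Finset.range k, ∑ e ∈ (T i).filter Q1, w e :=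
    Finset.sum_biUnion (hdisj Q1)
  -- each parity union is a matching of G
  have hmatch : ∀ (r : ℕ) (Q : Sym2 V → Prop)
      (hQ : ∀ e, Q e ↔ ∃ m, e ∈ levelEdges G v m ∧ m % 2 = r),
      (∑ e ∈ (Finset.range k).biUnion (fun i => (T i).filter Q), w e) ≤ nuW G w := by
    intro r Q hQ
    have hset : (↑((Finset.range k).biUnion (fun i => (T i).filter Q)) : Set (Sym2 V))
        = {e | ∃ i < k, e ∈ M i ∧ ∃ m, e ∈ levelEdges G v m ∧ m % 2 = r} := by
      ext e
      simp only [Finset.coe_biUnion, Finset.coe_filter, Set.mem_iUnion, Set.mem_setOf_eq,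
        Finset.mem_coe, Finset.mem_range, hTmem, hQ]
      constructor
      · rintro ⟨i, hi, hei, hq⟩; exact ⟨i, hi, hei, hq⟩
      · rintro ⟨i, hi, hei, hq⟩; exact ⟨i, hi, hei, hq⟩
    have := hGle _ (hset ▸ matching_parity_union G v k M (fun i _ => hMm i) r)
    rwa [finsum_mem_coe_finset] at this
  -- choose the minimum
  obtain ⟨i₀, hi₀mem, hi₀min⟩ := Finset.exists_min_image (Finset.range k) ν
    ⟨0, Finset.mem_range.mpr (by omega)⟩
  refine ⟨i₀, Finset.mem_range.mp hi₀mem, ?_⟩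
  calc k * ν i₀ = ∑ _i ∈ Finset.range k, ν i₀ := by
        rw [Finset.sum_const, Finset.card_range, smul_eq_mul]
    _ ≤ ∑ i ∈ Finset.range k, ν i := Finset.sum_le_sum hi₀min
    _ = (∑ e ∈ N0, w e) + (∑ e ∈ N1, w e) := by
        rw [hsum0, hsum1, ← Finset.sum_add_distrib]
        exact Finset.sum_congr rfl (fun i hi => by rw [← hTw i, split i hi])
    _ ≤ nuW G w + nuW G w :=
        Nat.add_le_add (hmatch 0 Q0 (fun e => Iff.rfl)) (hmatch 1 Q1 (fun e => Iff.rfl))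
    _ = 2 * nuW G w := by ring
end

section
/- Let G be a finite simple undirected graph and let d ≥ 1 be an integer with deg_G(x) ≤ d for every vertex x. Build a flow network N with vertex set {s, t} ⊔ V(G) ⊔ E(G) and the following arcs: for each x ∈ V(G), an arc s → x of capacity d (the set E₁); for each edge e = {x, y} ∈ E(G), arcs x → e and y → e of capacity 1 (the set E₂); for each e ∈ E(G), an arc e → t of capacity 1 (the set E₃); and for each x ∈ V(G), an arc x → t of capacity d − deg_G(x) (the set E₄). If G has an independent set S with |S| = k, then N admits a feasible integral flow f of value k·d such that the set of arcs of E₁ carrying positive flow is exactly {s → x : x ∈ S} (in particular, exactly k arcs of E₁ carry positive flow). -/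
open scoped BigOperators

/-- Vertices of the flow network `N`: a source `s`, a sink `t`, a vertex for each
vertex of `G`, and a vertex for each (potential) edge of `G`. -/
inductive NetV (V : Type*) where
  | s : NetV V
  | t : NetV V
  | vert : V → NetV V
  | edge : Sym2 V → NetV V
  deriving DecidableEq

instance {V : Type*} [Fintype V] [DecidableEq V] : Fintype (NetV V) :=
  Fintype.ofEquiv (Option (Option (V ⊕ Sym2 V)))
    { toFun := fun x => match x with
        | none => NetV.s
        | some none => NetV.t
        | some (some (Sum.inl v)) => NetV.vert v
        | some (some (Sum.inr e)) => NetV.edge e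
      invFun := fun x => match x with
        | NetV.s => none
        | NetV.t => some none
        | NetV.vert v => some (some (Sum.inl v))
        | NetV.edge e => some (some (Sum.inr e))
      left_inv := by rintro (_ | _ | _ | _) <;> rfl
      right_inv := by rintro (_ | _ | _ | _) <;> rfl }

/-- Capacities of the network built from `G` and `d`: arcs `s → x` of capacity `d`
(the set `E₁`), arcs `x → e` of capacity `1` for `x` an endpoint of the edge `e`
(the set `E₂`), arcs `e → t` of capacity `1` (the set `E₃`), and arcs `x → t` of
capacity `d - deg_G(x)` (the set `E₄`); all other pairs get capacity `0`, i.e.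
are not arcs of the network. -/
def netCap {V : Type*} [Fintype V] [DecidableEq V] (G : SimpleGraph V)
    [DecidableRel G.Adj] (d : ℕ) : NetV V → NetV V → ℕ
  | NetV.s, NetV.vert _ => d
  | NetV.vert x, NetV.edge e => if e ∈ G.edgeSet ∧ x ∈ e then 1 else 0
  | NetV.edge e, NetV.t => if e ∈ G.edgeSet then 1 else 0
  | NetV.vert x, NetV.t => d - G.degree x
  | _, _ => 0

/-- `f` is a feasible integral flow: it respects the capacities, and flow is
conserved at every vertex other than the source `s` and the sink `t`. -/
def IsFeasibleFlow {N : Type*} [Fintype N] (cap : N → N → ℕ) (s t : N)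
    (f : N → N → ℕ) : Prop :=
  (∀ a b : N, f a b ≤ cap a b) ∧
    ∀ v : N, v ≠ s → v ≠ t → (∑ u : N, f u v) = (∑ u : N, f v u)

/-!
The flow saturates the subnetwork induced by `s`, `t`, the vertices of `S` and the edges
meeting `S`. A vertex `x ∈ S` receives `d` from `s` and sends one unit to each of its `deg x`
incident edges and `d - deg x` to `t`. Since `S` is independent, an edge meeting `S` has exactly
one endpoint in `S`, so it receives exactly one unit, which it passes on to `t`.
-/

open Finset

section Restriction

variable {N : Type*} {cap : N → N → ℕ} {A : N → Prop}

open Classical in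
noncomputable def restrictCap (cap : N → N → ℕ) (A : N → Prop) (u v : N) : ℕ :=
  if A u ∧ A v then cap u v else 0

theorem restrictCap_le (u v : N) : restrictCap cap A u v ≤ cap u v := by
  unfold restrictCap
  split_ifs <;> simp

variable [Fintype N]

theorem sum_restrictCap_in_eq_zero {v : N} (hv : ¬A v) : ∑ u, restrictCap cap A u v = 0 :=
  sum_eq_zero fun _ _ => if_neg fun h => hv h.2

theorem sum_restrictCap_out_eq_zero {v : N} (hv : ¬A v) : ∑ u, restrictCap cap A v u = 0 :=
  sum_eq_zero fun _ _ => if_neg fun h => hv h.1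

theorem isFeasibleFlow_restrictCap {s t : N}
    (hcons : ∀ v, v ≠ s → v ≠ t → A v →
      ∑ u, restrictCap cap A u v = ∑ u, restrictCap cap A v u) :
    IsFeasibleFlow cap s t (restrictCap cap A) := by
  refine ⟨restrictCap_le, fun v hs ht => ?_⟩
  by_cases hv : A v
  · exact hcons v hs ht hv
  · rw [sum_restrictCap_in_eq_zero hv, sum_restrictCap_out_eq_zero hv]

end Restriction

theorem SimpleGraph.card_filter_mem_edge_eq_one {V : Type*} [DecidableEq V] {G : SimpleGraph V}
    {S : Finset V} (hS : G.IsIndepSet S) {e : Sym2 V} (he : e ∈ G.edgeSet) {x : V}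
    (hxS : x ∈ S) (hxe : x ∈ e) : #{y ∈ S | y ∈ e} = 1 := by
  refine card_eq_one.2 ⟨x, eq_singleton_iff_unique_mem.2 ⟨by simp [hxS, hxe], fun y hy => ?_⟩⟩
  rw [mem_filter] at hy
  by_contra hyx
  rw [(Sym2.mem_and_mem_iff hyx).1 ⟨hy.2, hxe⟩, SimpleGraph.mem_edgeSet] at he
  exact hS hy.1 hxS hyx he

namespace NetV

def optionEquiv (V : Type*) : Option (Option (V ⊕ Sym2 V)) ≃ NetV V where
  toFun
    | none => s
    | some none => t
    | some (some (Sum.inl v)) => vert v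
    | some (some (Sum.inr e)) => edge e
  invFun
    | s => none
    | t => some none
    | vert v => some (some (Sum.inl v))
    | edge e => some (some (Sum.inr e))
  left_inv := by rintro (_ | _ | _ | _) <;> rfl
  right_inv := by rintro (_ | _ | _ | _) <;> rfl

variable {V : Type*}

theorem sum_univ [Fintype V] [DecidableEq V] {M : Type*} [AddCommMonoid M] (g : NetV V → M) :
    ∑ u, g u = g s + g t + ∑ x, g (vert x) + ∑ e, g (edge e) := by
  rw [← Equiv.sum_comp (optionEquiv V) g]
  simp [optionEquiv, Fintype.sum_option, Fintype.sum_sum_type, add_assoc]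

def Reached (S : Finset V) : NetV V → Prop
  | s => True
  | t => True
  | vert x => x ∈ S
  | edge e => ∃ x ∈ S, x ∈ e

section Reached

variable {S : Finset V}

@[simp] theorem reached_s : Reached S s := trivial

@[simp] theorem reached_t : Reached S t := trivial

-- Stated as `↔` rather than unfolded by `simp [Reached]`, which would rewrite the proposition
-- of an `ite` without its `Decidable` instance.
@[simp] theorem reached_vert {x : V} : Reached S (vert x) ↔ x ∈ S := by
  simp only [Reached]

@[simp] theorem reached_edge {e : Sym2 V} : Reached S (edge e) ↔ ∃ x ∈ S, x ∈ e := by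
  simp only [Reached]

end Reached

variable [Fintype V] [DecidableEq V] {G : SimpleGraph V} [DecidableRel G.Adj] {d : ℕ}
  {S : Finset V}

theorem sum_netCap_vert_edge (x : V) : ∑ e, netCap G d (vert x) (edge e) = G.degree x := by
  simp only [netCap, sum_boole, Nat.cast_id, ← G.card_incidenceFinset_eq_degree]
  congr 1
  ext e
  simp [SimpleGraph.mem_incidenceFinset, SimpleGraph.incidenceSet]

theorem restrictCap_s_vert (x : V) :
    restrictCap (netCap G d) (Reached S) s (vert x) = if x ∈ S then d else 0 := by
  simp [restrictCap, netCap]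

theorem sum_restrictCap_out_of_s : ∑ u, restrictCap (netCap G d) (Reached S) s u = #S * d := by
  simp [sum_univ, restrictCap, netCap]

theorem sum_restrictCap_into_s : ∑ u, restrictCap (netCap G d) (Reached S) u s = 0 :=
  sum_eq_zero fun u _ => Nat.le_zero.1 <| (restrictCap_le u _).trans <| by cases u <;> rfl

theorem sum_restrictCap_into_vert {x : V} (hx : x ∈ S) :
    ∑ u, restrictCap (netCap G d) (Reached S) u (vert x) = d := by
  simp [sum_univ, restrictCap, netCap, hx]

theorem sum_restrictCap_out_of_vert {x : V} (hx : x ∈ S) (hdeg : G.degree x ≤ d) :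
    ∑ u, restrictCap (netCap G d) (Reached S) (vert x) u = d := by
  have hedge (e : Sym2 V) :
      restrictCap (netCap G d) (Reached S) (vert x) (edge e) = netCap G d (vert x) (edge e) := by
    by_cases hxe : x ∈ e
    · exact if_pos ⟨hx, x, hx, hxe⟩
    · simp [restrictCap, netCap, hxe]
  rw [sum_univ]
  simp only [hedge, sum_netCap_vert_edge]
  simp only [restrictCap, reached_vert, hx, reached_s, and_self, ↓reduceIte, netCap, reached_t,
    zero_add, true_and, ite_self, sum_const_zero, add_zero]
  omega

theorem sum_restrictCap_into_edge_eq_out (hS : G.IsIndepSet S) {e : Sym2 V}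
    (he : Reached S (edge e)) :
    ∑ u, restrictCap (netCap G d) (Reached S) u (edge e) =
      ∑ u, restrictCap (netCap G d) (Reached S) (edge e) u := by
  have hreach : ∃ y ∈ S, y ∈ e := he
  by_cases hedge : e ∈ G.edgeSet
  · simp only [restrictCap, reached_edge, hreach, and_true, netCap, sum_univ, reached_s,
      and_self, ↓reduceIte, reached_t, add_zero, reached_vert, hedge, true_and, sum_ite_mem,
      univ_inter, sum_boole, Nat.cast_id, zero_add, ite_self, sum_const_zero]
    obtain ⟨x, hxS, hxe⟩ := hreach
    exact SimpleGraph.card_filter_mem_edge_eq_one hS hedge hxS hxe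
  · simp [sum_univ, restrictCap, netCap, hedge]

end NetV

/-- If `G` has an independent set `S` of size `k`, then the network admits a
feasible integral flow of value `k·d` such that the arcs of `E₁` carrying positive
flow are exactly the arcs `s → x` with `x ∈ S`. -/
theorem independentSet_gives_flow {V : Type*} [Fintype V] [DecidableEq V]
    (G : SimpleGraph V) [DecidableRel G.Adj] (d : ℕ) (hd : 1 ≤ d)
    (hdeg : ∀ x : V, G.degree x ≤ d) (k : ℕ) (S : Finset V)
    (hind : ∀ x ∈ S, ∀ y ∈ S, ¬G.Adj x y) (hcard : S.card = k) :
    ∃ f : NetV V → NetV V → ℕ,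
      IsFeasibleFlow (netCap G d) NetV.s NetV.t f ∧
      (∑ u : NetV V, f NetV.s u) - (∑ u : NetV V, f u NetV.s) = k * d ∧
      ∀ x : V, 0 < f NetV.s (NetV.vert x) ↔ x ∈ S := by
  have hS : G.IsIndepSet S := fun x hx y hy _ => hind x hx y hy
  refine ⟨restrictCap (netCap G d) (NetV.Reached S), isFeasibleFlow_restrictCap ?_, ?_,
    fun x => ?_⟩
  · rintro (_ | _ | x | e) hs ht hv
    · exact absurd rfl hs
    · exact absurd rfl ht
    · rw [NetV.sum_restrictCap_into_vert hv, NetV.sum_restrictCap_out_of_vert hv (hdeg x)]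
    · exact NetV.sum_restrictCap_into_edge_eq_out hS hv
  · rw [NetV.sum_restrictCap_out_of_s, NetV.sum_restrictCap_into_s, hcard, Nat.sub_zero]
  · simp [NetV.restrictCap_s_vert, Nat.pos_iff_ne_zero, Nat.one_le_iff_ne_zero.1 hd]
end

section
/- Let G be a finite simple undirected graph and let d ≥ 1 be an integer with deg_G(x) ≤ d for every vertex x. Build a flow network N with vertex set {s, t} ⊔ V(G) ⊔ E(G) and the following arcs: for each x ∈ V(G), an arc s → x of capacity d (the set E₁); for each edge e = {x, y} ∈ E(G), arcs x → e and y → e of capacity 1 (the set E₂); for each e ∈ E(G), an arc e → t of capacity 1 (the set E₃); and for each x ∈ V(G), an arc x → t of capacity d − deg_G(x) (the set E₄). Let k ∈ ℕ. If N admits a feasible integral flow f of value k·d such that at most k arcs of E₁ carry positive flow, then the set T = { x ∈ V(G) : f(s → x) = d } is an independent set of G with |T| = k. -/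
open scoped BigOperators

section Main
variable {V : Type*} [Fintype V] [DecidableEq V]

def netVEquiv (V : Type*) : Option (Option (V ⊕ Sym2 V)) ≃ NetV V :=
    { toFun := fun x => match x with
        | none => NetV.s
        | some none => NetV.t
        | some (some (Sum.inl v)) => NetV.vert v
        | some (some (Sum.inr e)) => NetV.edge e
      invFun := fun x => match x with
        | NetV.s => none
        | NetV.t => some none
        | NetV.vert v => some (some (Sum.inl v))
        | NetV.edge e => some (some (Sum.inr e))
      left_inv := by rintro (_ | _ | _ | _) <;> rfl
      right_inv := by rintro (_ | _ | _ | _) <;> rfl }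

lemma netV_sum {M : Type*} [AddCommMonoid M] (g : NetV V → M) :
    ∑ u : NetV V, g u = g NetV.s + g NetV.t + (∑ v : V, g (NetV.vert v)) +
      ∑ e : Sym2 V, g (NetV.edge e) := by
  rw [← Equiv.sum_comp (netVEquiv V) g]
  rw [Fintype.sum_option, Fintype.sum_option, Fintype.sum_sum_type]
  simp only [netVEquiv, Equiv.coe_fn_mk]
  abel

/-- Each ≤ d, sum over s equals card s * d, then each equals d. -/
lemma all_eq_of_sum {s : Finset V} {g : V → ℕ} {d : ℕ} (hle : ∀ x ∈ s, g x ≤ d)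
    (hsum : ∑ x ∈ s, g x = s.card * d) : ∀ x ∈ s, g x = d := by
  by_contra h
  push_neg at h
  obtain ⟨x, hxs, hxne⟩ := h
  have hlt : ∑ y ∈ s, g y < ∑ _y ∈ s, d :=
    Finset.sum_lt_sum hle ⟨x, hxs, lt_of_le_of_ne (hle x hxs) hxne⟩
  rw [Finset.sum_const, smul_eq_mul, hsum] at hlt
  exact lt_irrefl _ hlt

end Main

/-- If the network admits a feasible integral flow of value `k·d` with at most `k`
arcs of `E₁` carrying positive flow, then `T = {x : f(s → x) = d}` is an
independent set of `G` of size `k`. -/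
theorem flow_gives_independentSet {V : Type*} [Fintype V] [DecidableEq V]
    (G : SimpleGraph V) [DecidableRel G.Adj] (d : ℕ) (hd : 1 ≤ d)
    (hdeg : ∀ x : V, G.degree x ≤ d) (k : ℕ) (f : NetV V → NetV V → ℕ)
    (hf : IsFeasibleFlow (netCap G d) NetV.s NetV.t f)
    (hval : (∑ u : NetV V, f NetV.s u) - (∑ u : NetV V, f u NetV.s) = k * d)
    (hpos : (Finset.univ.filter fun x : V => 0 < f NetV.s (NetV.vert x)).card ≤ k) :
    (Finset.univ.filter fun x : V => f NetV.s (NetV.vert x) = d).card = k ∧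
      ∀ x : V, f NetV.s (NetV.vert x) = d →
        ∀ y : V, f NetV.s (NetV.vert y) = d → ¬G.Adj x y := by
  obtain ⟨hcap, hcons⟩ := hf
  have hzero : ∀ a b : NetV V, netCap G d a b = 0 → f a b = 0 :=
    fun a b h => Nat.le_zero.mp ((hcap a b).trans_eq h)
  have hins : ∀ u : NetV V, f u NetV.s = 0 := by
    intro u; apply hzero; cases u <;> rfl
  -- total flow out of s equals k * d
  have hout : ∑ x : V, f NetV.s (NetV.vert x) = k * d := by
    have h0 : ∑ u : NetV V, f u NetV.s = 0 := by simp [hins]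
    rw [h0, Nat.sub_zero] at hval
    rw [← hval, netV_sum (f NetV.s)]
    rw [hzero NetV.s NetV.s rfl, hzero NetV.s NetV.t rfl]
    have : ∀ e : Sym2 V, f NetV.s (NetV.edge e) = 0 := fun e => hzero _ _ rfl
    simp [this]
  have hgle : ∀ x : V, f NetV.s (NetV.vert x) ≤ d := fun x => hcap _ _
  set P : Finset V := Finset.univ.filter fun x => 0 < f NetV.s (NetV.vert x) with hP
  have hsumP : ∑ x ∈ P, f NetV.s (NetV.vert x) = k * d := by
    rw [← hout]
    apply Finset.sum_subset (Finset.filter_subset _ _)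
    intro x _ hx
    simp only [hP, Finset.mem_filter, Finset.mem_univ, true_and, not_lt, Nat.le_zero] at hx
    exact hx
  have hcardP : P.card = k := by
    have h1 : k * d ≤ P.card * d := by
      rw [← hsumP]
      calc ∑ x ∈ P, f NetV.s (NetV.vert x) ≤ ∑ _x ∈ P, d :=
            Finset.sum_le_sum fun x _ => hgle x
        _ = P.card * d := by rw [Finset.sum_const, smul_eq_mul]
    exact le_antisymm hpos (Nat.le_of_mul_le_mul_right h1 hd)
  have hPd : ∀ x ∈ P, f NetV.s (NetV.vert x) = d :=
    all_eq_of_sum (fun x _ => hgle x) (by rw [hsumP, hcardP])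
  have hTP : (Finset.univ.filter fun x : V => f NetV.s (NetV.vert x) = d) = P := by
    ext x
    simp only [hP, Finset.mem_filter, Finset.mem_univ, true_and]
    constructor
    · intro h; rw [h]; exact hd
    · intro h; exact hPd x (by simp [hP, h])
  refine ⟨by rw [hTP, hcardP], ?_⟩
  -- independence
  -- key claim: flow into every incident edge-vertex is 1
  have key : ∀ z : V, f NetV.s (NetV.vert z) = d → ∀ e : Sym2 V,
      e ∈ G.edgeSet → z ∈ e → f (NetV.vert z) (NetV.edge e) = 1 := by
    intro z hz e he hze
    have hcz := hcons (NetV.vert z) (by simp) (by simp)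
    rw [netV_sum (fun u => f u (NetV.vert z)), netV_sum (f (NetV.vert z))] at hcz
    have h1 : f NetV.t (NetV.vert z) = 0 := hzero _ _ rfl
    have h2 : ∀ v : V, f (NetV.vert v) (NetV.vert z) = 0 := fun v => hzero _ _ rfl
    have h3 : ∀ e : Sym2 V, f (NetV.edge e) (NetV.vert z) = 0 := fun e => hzero _ _ rfl
    have h4 : ∀ v : V, f (NetV.vert z) (NetV.vert v) = 0 := fun v => hzero _ _ rfl
    rw [hz] at hcz
    simp only [h1, h2, h3, h4, hins, Finset.sum_const_zero, add_zero, zero_add] at hcz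
    -- hcz : d = f (vert z) t + ∑ e, f (vert z) (edge e)
    have hE : ∑ e : Sym2 V, f (NetV.vert z) (NetV.edge e)
        = ∑ e ∈ G.incidenceFinset z, f (NetV.vert z) (NetV.edge e) := by
      symm
      apply Finset.sum_subset (Finset.subset_univ _)
      intro e' _ he'
      apply hzero
      rw [SimpleGraph.mem_incidenceFinset] at he'
      show (if e' ∈ G.edgeSet ∧ z ∈ e' then 1 else 0) = 0
      exact if_neg he'
    have hEle : ∀ e' ∈ G.incidenceFinset z, f (NetV.vert z) (NetV.edge e') ≤ 1 := by
      intro e' he'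
      refine (hcap _ _).trans ?_
      show (if e' ∈ G.edgeSet ∧ z ∈ e' then 1 else 0) ≤ 1
      split <;> omega
    have hsumE : ∑ e' ∈ G.incidenceFinset z, f (NetV.vert z) (NetV.edge e')
        = (G.incidenceFinset z).card * 1 := by
      rw [mul_one, G.card_incidenceFinset_eq_degree]
      have htle : f (NetV.vert z) NetV.t ≤ d - G.degree z := hcap _ _
      have hEle2 : ∑ e' ∈ G.incidenceFinset z, f (NetV.vert z) (NetV.edge e') ≤ G.degree z := by
        calc _ ≤ ∑ _e' ∈ G.incidenceFinset z, 1 := Finset.sum_le_sum hEle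
          _ = G.degree z := by rw [Finset.sum_const, smul_eq_mul, mul_one,
              G.card_incidenceFinset_eq_degree]
      have := hdeg z
      omega
    have := all_eq_of_sum hEle hsumE
    exact this e (by rw [SimpleGraph.mem_incidenceFinset]; exact ⟨he, hze⟩)
  intro x hx y hy hadj
  set e0 : Sym2 V := s(x, y) with he0
  have he0E : e0 ∈ G.edgeSet := hadj
  have hce := hcons (NetV.edge e0) (by simp) (by simp)
  rw [netV_sum (fun u => f u (NetV.edge e0)), netV_sum (f (NetV.edge e0))] at hce
  have h1 : f NetV.s (NetV.edge e0) = 0 := hzero _ _ rfl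
  have h2 : f NetV.t (NetV.edge e0) = 0 := hzero _ _ rfl
  have h3 : ∀ e : Sym2 V, f (NetV.edge e) (NetV.edge e0) = 0 := fun e => hzero _ _ rfl
  have h4 : ∀ v : V, f (NetV.edge e0) (NetV.vert v) = 0 := fun v => hzero _ _ rfl
  have h5 : ∀ e : Sym2 V, f (NetV.edge e0) (NetV.edge e) = 0 := fun e => hzero _ _ rfl
  simp only [h1, h2, h3, h4, h5, hins, Finset.sum_const_zero, add_zero, zero_add] at hce
  -- hce : ∑ v, f (vert v) (edge e0) = f (edge e0) t
  have hub : f (NetV.edge e0) NetV.t ≤ 1 := by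
    refine (hcap _ _).trans ?_
    show (if e0 ∈ G.edgeSet then 1 else 0) ≤ 1
    split <;> omega
  have hlb : 2 ≤ ∑ v : V, f (NetV.vert v) (NetV.edge e0) := by
    have hsub : ({x, y} : Finset V) ⊆ Finset.univ := Finset.subset_univ _
    have := Finset.sum_le_sum_of_subset (f := fun v => f (NetV.vert v) (NetV.edge e0)) hsub
    rw [Finset.sum_pair hadj.ne] at this
    rw [key x hx e0 he0E (by rw [he0]; exact Sym2.mem_mk_left x y),
        key y hy e0 he0E (by rw [he0]; exact Sym2.mem_mk_right x y)] at this
    exact this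
  omega
end

section
/- Let D be a finite directed graph with distinct vertices s and t and capacity function w : E(D) → ℕ. Let S₁, …, S_m ⊆ V(D) be vertex sets with s ∈ S_i and t ∉ S_i for each i, such that the arc sets δ⁺(S₁), …, δ⁺(S_m) are pairwise disjoint, where δ⁺(S) = { (u, v) ∈ E(D) : u ∈ S, v ∉ S }. Define a cost function c : E(D) → ℕ by c(e) = w(e) · |{ i : e ∈ δ⁺(S_i) }|. Then for every feasible integral flow f of value F, the total cost of the arcs carrying positive flow satisfies ∑_{e : f(e) > 0} c(e) ≥ m·F. -/
open scoped BigOperators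

/-- If the cost of each arc is its capacity times the number of the (pairwise
disjoint) `s`-`t` cuts `δ⁺(S₁), …, δ⁺(S_m)` containing it, then any feasible
integral flow of value `F` has arcs with positive flow of total cost at least
`m·F`. -/
theorem flow_cost_lower_bound {V : Type*} [Fintype V] [DecidableEq V]
    (E : Finset (V × V)) (w : V × V → ℕ) (s t : V) (hst : s ≠ t)
    (m : ℕ) (S : Fin m → Finset V) (hs : ∀ i, s ∈ S i) (ht : ∀ i, t ∉ S i)
    (hdisj : ∀ i j, i ≠ j →
      Disjoint (E.filter fun e => e.1 ∈ S i ∧ e.2 ∉ S i)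
        (E.filter fun e => e.1 ∈ S j ∧ e.2 ∉ S j))
    (f : V × V → ℕ) (hcap : ∀ e, f e ≤ w e) (hsupp : ∀ e ∉ E, f e = 0)
    (hcons : ∀ v : V, v ≠ s → v ≠ t → (∑ u : V, f (u, v)) = (∑ u : V, f (v, u)))
    (F : ℕ) (hF : (∑ u : V, f (s, u)) - (∑ u : V, f (u, s)) = F) :
    m * F ≤
      ∑ e ∈ E.filter fun e => 0 < f e,
        w e * (Finset.univ.filter fun i : Fin m => e.1 ∈ S i ∧ e.2 ∉ S i).card := by
  subst hF
  set P := E.filter fun e => 0 < f e with hP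
  -- per-cut bound
  have key : ∀ i : Fin m,
      (∑ u : V, f (s, u)) - (∑ u : V, f (u, s)) ≤
        ∑ e ∈ P.filter (fun e => e.1 ∈ S i ∧ e.2 ∉ S i), w e := by
    intro i
    set T := S i with hT
    -- conservation summed over T
    have h1 : (∑ v ∈ T, ∑ u : V, f (v, u)) + (∑ u : V, f (u, s))
        = (∑ v ∈ T, ∑ u : V, f (u, v)) + (∑ u : V, f (s, u)) := by
      have hsT : s ∈ T := hs i
      rw [← Finset.add_sum_erase T _ hsT, ← Finset.add_sum_erase T (fun v => ∑ u : V, f (u, v)) hsT]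
      have : ∀ v ∈ T.erase s, (∑ u : V, f (v, u)) = ∑ u : V, f (u, v) := by
        intro v hv
        exact (hcons v (Finset.ne_of_mem_erase hv)
          (fun h => ht i (h ▸ Finset.mem_of_mem_erase hv))).symm
      rw [Finset.sum_congr rfl this]
      ring
    -- split inner sums over membership in T
    have hsplit : ∀ g : V → ℕ, (∑ u : V, g u)
        = (∑ u ∈ Finset.univ.filter (· ∈ T), g u)
          + ∑ u ∈ Finset.univ.filter (· ∉ T), g u :=
      fun g => (Finset.sum_filter_add_sum_filter_not _ _ _).symm
    have h2 : (∑ v ∈ T, ∑ u ∈ Finset.univ.filter (· ∉ T), f (v, u))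
          + (∑ u : V, f (u, s))
        = (∑ v ∈ T, ∑ u ∈ Finset.univ.filter (· ∉ T), f (u, v))
          + (∑ u : V, f (s, u)) := by
      have hc : (∑ v ∈ T, ∑ u ∈ Finset.univ.filter (· ∈ T), f (v, u))
          = ∑ v ∈ T, ∑ u ∈ Finset.univ.filter (· ∈ T), f (u, v) := by
        rw [Finset.filter_univ_mem]
        exact Finset.sum_comm
      have l1 : (∑ v ∈ T, ∑ u : V, f (v, u))
          = (∑ v ∈ T, ∑ u ∈ Finset.univ.filter (· ∈ T), f (v, u))
            + ∑ v ∈ T, ∑ u ∈ Finset.univ.filter (· ∉ T), f (v, u) := by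
        rw [← Finset.sum_add_distrib]
        exact Finset.sum_congr rfl fun v _ => hsplit _
      have l2 : (∑ v ∈ T, ∑ u : V, f (u, v))
          = (∑ v ∈ T, ∑ u ∈ Finset.univ.filter (· ∈ T), f (u, v))
            + ∑ v ∈ T, ∑ u ∈ Finset.univ.filter (· ∉ T), f (u, v) := by
        rw [← Finset.sum_add_distrib]
        exact Finset.sum_congr rfl fun v _ => hsplit _
      have e1 := h1
      rw [l1, l2, hc] at e1
      omega
    -- forward flow across cut equals the double sum
    have h3 : (∑ v ∈ T, ∑ u ∈ Finset.univ.filter (· ∉ T), f (v, u))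
        = ∑ e ∈ P.filter (fun e => e.1 ∈ T ∧ e.2 ∉ T), f e := by
      rw [← Finset.sum_product']
      symm
      apply Finset.sum_subset
      · intro e he
        simp only [hP, Finset.mem_filter, Finset.mem_product, Finset.mem_univ,
          true_and] at he ⊢
        exact ⟨he.2.1, he.2.2⟩
      · intro e he hne
        simp only [Finset.mem_product, Finset.mem_filter, Finset.mem_univ, true_and] at he
        by_contra hf0
        apply hne
        by_cases hE : e ∈ E
        · simp only [hP, Finset.mem_filter]
          exact ⟨⟨hE, Nat.pos_of_ne_zero hf0⟩, he.1, he.2⟩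
        · exact absurd (hsupp e hE) hf0
    calc (∑ u : V, f (s, u)) - (∑ u : V, f (u, s))
        ≤ ∑ e ∈ P.filter (fun e => e.1 ∈ T ∧ e.2 ∉ T), f e := by omega
      _ ≤ ∑ e ∈ P.filter (fun e => e.1 ∈ T ∧ e.2 ∉ T), w e :=
          Finset.sum_le_sum fun e _ => hcap e
  -- sum over all cuts and swap
  calc m * ((∑ u : V, f (s, u)) - (∑ u : V, f (u, s)))
      = ∑ _i : Fin m, ((∑ u : V, f (s, u)) - (∑ u : V, f (u, s))) := by
        simp [Finset.sum_const, Finset.card_univ]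
    _ ≤ ∑ i : Fin m, ∑ e ∈ P.filter (fun e => e.1 ∈ S i ∧ e.2 ∉ S i), w e :=
        Finset.sum_le_sum fun i _ => key i
    _ = ∑ e ∈ P, w e * (Finset.univ.filter fun i : Fin m => e.1 ∈ S i ∧ e.2 ∉ S i).card := by
        simp only [Finset.sum_filter]
        rw [Finset.sum_comm]
        apply Finset.sum_congr rfl
        intro e _
        rw [← Finset.sum_filter, Finset.sum_const, smul_eq_mul, mul_comm]
end

section
/- Let D be a finite directed graph with distinct vertices s and t and capacity function w : E(D) → ℕ. Let S₁, …, S_m ⊆ V(D) be vertex sets with s ∈ S_i and t ∉ S_i for each i, such that the arc sets δ⁺(S₁), …, δ⁺(S_m) are pairwise disjoint, where δ⁺(S) = { (u, v) ∈ E(D) : u ∈ S, v ∉ S }. Define a cost function c : E(D) → ℕ by c(e) = w(e) · |{ i : e ∈ δ⁺(S_i) }|. Let f be a feasible integral flow of value F, and suppose there exists an arc e* belonging to some δ⁺(S_i) with 0 < f(e*) < w(e*). Then the total cost of the arcs carrying positive flow satisfies ∑_{e : f(e) > 0} c(e) ≥ m·F + 1. -/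
open scoped BigOperators

/-- Flow across any `s`-`t` cut is at least the flow value `F`. -/
lemma cut_flow_ge {V : Type*} [Fintype V] [DecidableEq V]
    (E : Finset (V × V)) (s t : V)
    (f : V × V → ℕ) (hsupp : ∀ e ∉ E, f e = 0)
    (hcons : ∀ v : V, v ≠ s → v ≠ t → (∑ u : V, f (u, v)) = (∑ u : V, f (v, u)))
    (F : ℕ) (hF : (∑ u : V, f (s, u)) - (∑ u : V, f (u, s)) = F)
    (T : Finset V) (hsT : s ∈ T) (htT : t ∉ T) :
    F ≤ ∑ e ∈ E.filter (fun e => e.1 ∈ T ∧ e.2 ∉ T), f e := by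
  classical
  set X := ∑ v ∈ T, ∑ u ∈ Finset.univ.filter (fun u => u ∉ T), f (v, u) with hX
  set Y := ∑ v ∈ T, ∑ u ∈ Finset.univ.filter (fun u => u ∉ T), f (u, v) with hY
  -- split full sums by membership of the second coordinate in T
  have hA : (∑ v ∈ T, ∑ u : V, f (v, u))
      = (∑ v ∈ T, ∑ u ∈ Finset.univ.filter (fun u => u ∈ T), f (v, u)) + X := by
    rw [hX, ← Finset.sum_add_distrib]
    exact Finset.sum_congr rfl fun v _ =>
      (Finset.sum_filter_add_sum_filter_not _ _ _).symm
  have hB : (∑ v ∈ T, ∑ u : V, f (u, v))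
      = (∑ v ∈ T, ∑ u ∈ Finset.univ.filter (fun u => u ∈ T), f (u, v)) + Y := by
    rw [hY, ← Finset.sum_add_distrib]
    exact Finset.sum_congr rfl fun v _ =>
      (Finset.sum_filter_add_sum_filter_not _ _ _).symm
  have hswap : (∑ v ∈ T, ∑ u ∈ Finset.univ.filter (fun u => u ∈ T), f (u, v))
      = ∑ v ∈ T, ∑ u ∈ Finset.univ.filter (fun u => u ∈ T), f (v, u) := by
    have hTf : Finset.univ.filter (fun u => u ∈ T) = T := by
      ext x; simp
    rw [hTf]
    exact Finset.sum_comm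
  -- conservation: A + in(s) = B + out(s)
  have hvert : (∑ v ∈ T, ∑ u : V, f (v, u)) + (∑ u : V, f (u, s))
      = (∑ v ∈ T, ∑ u : V, f (u, v)) + (∑ u : V, f (s, u)) := by
    have h1 : (∑ v ∈ T, ∑ u : V, f (v, u))
        = (∑ u : V, f (s, u)) + ∑ v ∈ T.erase s, ∑ u : V, f (v, u) :=
      (Finset.add_sum_erase _ _ hsT).symm
    have h2 : (∑ v ∈ T, ∑ u : V, f (u, v))
        = (∑ u : V, f (u, s)) + ∑ v ∈ T.erase s, ∑ u : V, f (u, v) :=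
      (Finset.add_sum_erase _ _ hsT).symm
    have h3 : (∑ v ∈ T.erase s, ∑ u : V, f (v, u))
        = ∑ v ∈ T.erase s, ∑ u : V, f (u, v) := by
      refine Finset.sum_congr rfl fun v hv => ?_
      have hvs : v ≠ s := (Finset.mem_erase.mp hv).1
      have hvt : v ≠ t := fun h => htT (h ▸ (Finset.mem_erase.mp hv).2)
      exact (hcons v hvs hvt).symm
    rw [h1, h2, h3]; ring
  -- hence X + in(s) = Y + out(s)
  have hXY : X + (∑ u : V, f (u, s)) = Y + (∑ u : V, f (s, u)) := by
    have := hvert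
    rw [hA, hB, hswap] at this
    omega
  have hFle : F ≤ X := by omega
  -- identify X with the sum over the cut arcs
  have hXprod : X = ∑ e ∈ T ×ˢ (Finset.univ.filter (fun u => u ∉ T)), f e := by
    rw [hX, Finset.sum_product]
  have hsub : E.filter (fun e => e.1 ∈ T ∧ e.2 ∉ T)
      ⊆ T ×ˢ (Finset.univ.filter (fun u => u ∉ T)) := by
    intro e he
    rw [Finset.mem_filter] at he
    rw [Finset.mem_product, Finset.mem_filter]
    exact ⟨he.2.1, Finset.mem_univ _, he.2.2⟩
  have hXeq : X = ∑ e ∈ E.filter (fun e => e.1 ∈ T ∧ e.2 ∉ T), f e := by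
    rw [hXprod]
    refine (Finset.sum_subset hsub ?_).symm
    intro e he hne
    rw [Finset.mem_product, Finset.mem_filter] at he
    apply hsupp
    intro heE
    exact hne (Finset.mem_filter.mpr ⟨heE, he.1, he.2.2⟩)
  omega

/-- If the cost of each arc is its capacity times the number of the (pairwise
disjoint) `s`-`t` cuts `δ⁺(S₁), …, δ⁺(S_m)` containing it, and some arc of one of
the cuts carries partial flow (positive but below capacity), then any feasible
integral flow of value `F` has arcs with positive flow of total cost at least
`m·F + 1`. -/
theorem flow_cost_lower_bound_partial {V : Type*} [Fintype V] [DecidableEq V]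
    (E : Finset (V × V)) (w : V × V → ℕ) (s t : V) (hst : s ≠ t)
    (m : ℕ) (S : Fin m → Finset V) (hs : ∀ i, s ∈ S i) (ht : ∀ i, t ∉ S i)
    (hdisj : ∀ i j, i ≠ j →
      Disjoint (E.filter fun e => e.1 ∈ S i ∧ e.2 ∉ S i)
        (E.filter fun e => e.1 ∈ S j ∧ e.2 ∉ S j))
    (f : V × V → ℕ) (hcap : ∀ e, f e ≤ w e) (hsupp : ∀ e ∉ E, f e = 0)
    (hcons : ∀ v : V, v ≠ s → v ≠ t → (∑ u : V, f (u, v)) = (∑ u : V, f (v, u)))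
    (F : ℕ) (hF : (∑ u : V, f (s, u)) - (∑ u : V, f (u, s)) = F)
    (hpartial : ∃ e ∈ E, (∃ i : Fin m, e.1 ∈ S i ∧ e.2 ∉ S i) ∧
      0 < f e ∧ f e < w e) :
    m * F + 1 ≤
      ∑ e ∈ E.filter fun e => 0 < f e,
        w e * (Finset.univ.filter fun i : Fin m => e.1 ∈ S i ∧ e.2 ∉ S i).card := by
  classical
  obtain ⟨e₀, he₀E, ⟨i₀, hi₀⟩, hf₀pos, hf₀lt⟩ := hpartial
  set P := E.filter (fun e => 0 < f e) with hP
  -- rewrite the cost sum as a double sum over cuts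
  have hrw : (∑ e ∈ P,
        w e * (Finset.univ.filter fun i : Fin m => e.1 ∈ S i ∧ e.2 ∉ S i).card)
      = ∑ i : Fin m, ∑ e ∈ P.filter (fun e => e.1 ∈ S i ∧ e.2 ∉ S i), w e := by
    have : ∀ e ∈ P,
        w e * (Finset.univ.filter fun i : Fin m => e.1 ∈ S i ∧ e.2 ∉ S i).card
        = ∑ i : Fin m, if e.1 ∈ S i ∧ e.2 ∉ S i then w e else 0 := by
      intro e _
      rw [Finset.card_filter, Finset.mul_sum]
      exact Finset.sum_congr rfl fun i _ => by split <;> simp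
    rw [Finset.sum_congr rfl this, Finset.sum_comm]
    exact Finset.sum_congr rfl fun i _ => (Finset.sum_filter _ _).symm
  rw [hrw]
  -- per-cut lower bounds
  have hflow : ∀ i : Fin m,
      F ≤ ∑ e ∈ P.filter (fun e => e.1 ∈ S i ∧ e.2 ∉ S i), f e := by
    intro i
    have hcut := cut_flow_ge E s t f hsupp hcons F hF (S i) (hs i) (ht i)
    have heq : (∑ e ∈ E.filter (fun e => e.1 ∈ S i ∧ e.2 ∉ S i), f e)
        = ∑ e ∈ P.filter (fun e => e.1 ∈ S i ∧ e.2 ∉ S i), f e := by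
      refine (Finset.sum_subset ?_ ?_).symm
      · intro e he
        rw [Finset.mem_filter] at he ⊢
        rw [hP, Finset.mem_filter] at he
        exact ⟨he.1.1, he.2⟩
      · intro e he hne
        rw [Finset.mem_filter] at he
        by_contra hpos
        exact hne (Finset.mem_filter.mpr
          ⟨Finset.mem_filter.mpr ⟨he.1, Nat.pos_of_ne_zero hpos⟩, he.2⟩)
    omega
  have hwge : ∀ i : Fin m,
      F ≤ ∑ e ∈ P.filter (fun e => e.1 ∈ S i ∧ e.2 ∉ S i), w e := by
    intro i
    exact le_trans (hflow i) (Finset.sum_le_sum fun e _ => hcap e)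
  -- the cut containing the partial arc gives one more
  have he₀P : e₀ ∈ P.filter (fun e => e.1 ∈ S i₀ ∧ e.2 ∉ S i₀) := by
    rw [Finset.mem_filter, hP, Finset.mem_filter]
    exact ⟨⟨he₀E, hf₀pos⟩, hi₀⟩
  have hi₀bd : F + 1 ≤ ∑ e ∈ P.filter (fun e => e.1 ∈ S i₀ ∧ e.2 ∉ S i₀), w e := by
    have h1 : (∑ e ∈ P.filter (fun e => e.1 ∈ S i₀ ∧ e.2 ∉ S i₀), f e) + 1
        ≤ ∑ e ∈ P.filter (fun e => e.1 ∈ S i₀ ∧ e.2 ∉ S i₀), w e := by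
      rw [← Finset.add_sum_erase _ w he₀P, ← Finset.add_sum_erase _ f he₀P]
      have h2 : (∑ e ∈ (P.filter (fun e => e.1 ∈ S i₀ ∧ e.2 ∉ S i₀)).erase e₀, f e)
          ≤ ∑ e ∈ (P.filter (fun e => e.1 ∈ S i₀ ∧ e.2 ∉ S i₀)).erase e₀, w e :=
        Finset.sum_le_sum fun e _ => hcap e
      omega
    have := hflow i₀
    omega
  -- combine
  calc m * F + 1 ≤ (F + 1) + ∑ i ∈ Finset.univ.erase i₀, F := by
        rw [Finset.sum_const, Finset.card_erase_of_mem (Finset.mem_univ _),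
          Finset.card_univ, Fintype.card_fin, smul_eq_mul]
        cases m with
        | zero => exact i₀.elim0
        | succ n => simp [Nat.succ_sub_one, Nat.succ_mul]; omega
    _ ≤ (∑ e ∈ P.filter (fun e => e.1 ∈ S i₀ ∧ e.2 ∉ S i₀), w e)
          + ∑ i ∈ Finset.univ.erase i₀,
              ∑ e ∈ P.filter (fun e => e.1 ∈ S i ∧ e.2 ∉ S i), w e :=
        Nat.add_le_add hi₀bd (Finset.sum_le_sum fun i _ => hwge i)
    _ = ∑ i : Fin m, ∑ e ∈ P.filter (fun e => e.1 ∈ S i ∧ e.2 ∉ S i), w e :=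
        Finset.add_sum_erase Finset.univ
          (fun i => ∑ e ∈ P.filter (fun e => e.1 ∈ S i ∧ e.2 ∉ S i), w e)
          (Finset.mem_univ i₀)
end
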